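/- arXiv:1612.01841 — 2 statements merged into one kernel-verified Lean document; each statement's English description precedes it below -/
import Mathlib

section
/- Let Z be a homogeneous space with volume weight v and radial weight r, and suppose Z = Ω Γ⁻ W·z₀ where Ω ⊂ G is compact, Γ⁻ is contained in a lattice in A_Z, and W is finite. Assume: (i) on each piece Ω y·z₀ one has r(z) ≥ c₁ r(y·z₀) and v(z) ≥ c₂ v(y·z₀), (ii) vol_Z(Ω y·z₀)/v(y·z₀) is bounded uniformly in y, (iii) Σ_{a ∈ Γ} (1+‖log a‖)^{-s} < ∞ for s > dim 𝔞_Z, and (iv) r(aw·z₀) is comparable to ‖log a‖. Then ∫_Z (1 + r(z))^{-s} v(z)^{-1} dz < ∞ for every s > dim 𝔞_Z. -/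
open MeasureTheory
open scoped ENNReal

/-!
On the piece `Ω y·z₀` the integrand `(1 + r)^{-s} v^{-1}` is bounded by a constant multiple of
`(1 + ℓ)^{-s} v(y·z₀)^{-1}`, because `r ≥ c₁ r(y·z₀) ≥ c₁ d₁ ℓ` and `v ≥ c₂ v(y·z₀)` there. The
piece has volume at most `M v(y·z₀)`, so the volume weights cancel and the integral is dominated
by a multiple of the lattice sum `Σ (1 + ℓ)^{-s}`.
-/

/-- The pieces need not be measurable: each one is replaced by a measurable hull of the same
measure. -/
theorem lintegral_le_tsum_mul_measure_of_iUnion_eq_univ {α ι : Type*} [MeasurableSpace α]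
    [Countable ι] (μ : Measure α) {f : α → ℝ≥0∞} {s : ι → Set α} (hs : ⋃ i, s i = Set.univ)
    {b : ι → ℝ≥0∞} (hf : ∀ i, ∀ x ∈ s i, f x ≤ b i) :
    ∫⁻ x, f x ∂μ ≤ ∑' i, b i * μ (s i) := by
  have hcover : ∀ x, f x ≤ ∑' i, (toMeasurable μ (s i)).indicator (fun _ ↦ b i) x := by
    intro x
    obtain ⟨i, hi⟩ := Set.mem_iUnion.mp (hs ▸ Set.mem_univ x)
    calc f x ≤ b i := hf i x hi
      _ = (toMeasurable μ (s i)).indicator (fun _ ↦ b i) x :=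
        (Set.indicator_of_mem (subset_toMeasurable μ _ hi) fun _ ↦ b i).symm
      _ ≤ _ := ENNReal.le_tsum i
  calc ∫⁻ x, f x ∂μ
      ≤ ∫⁻ x, ∑' i, (toMeasurable μ (s i)).indicator (fun _ ↦ b i) x ∂μ := lintegral_mono hcover
    _ = ∑' i, b i * μ (s i) := by
      rw [lintegral_tsum fun i ↦
        (measurable_const.indicator (measurableSet_toMeasurable μ _)).aemeasurable]
      simp only [lintegral_indicator_const (measurableSet_toMeasurable μ _),
        measure_toMeasurable]

theorem one_add_rpow_neg_le_of_mul_le {a b m s : ℝ} (hm : 0 < m) (hm₁ : m ≤ 1) (hb : 0 ≤ b)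
    (hs : 0 ≤ s) (hab : m * b ≤ a) : (1 + a) ^ (-s) ≤ m ^ (-s) * (1 + b) ^ (-s) := by
  rw [← Real.mul_rpow hm.le (by linarith)]
  exact Real.rpow_le_rpow_of_nonpos (by positivity) (by linarith) (neg_nonpos.mpr hs)

theorem one_add_rpow_neg_div_le {r₀ r₁ v₀ v₁ ℓ c₁ c₂ d₁ s : ℝ} (hv₀ : 0 < v₀) (hc₁ : 0 < c₁)
    (hc₂ : 0 < c₂) (hd₁ : 0 < d₁) (hℓ : 0 ≤ ℓ) (hs : 0 ≤ s)
    (hr : c₁ * r₀ ≤ r₁) (hv : c₂ * v₀ ≤ v₁) (hℓr : d₁ * ℓ ≤ r₀) :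
    (1 + r₁) ^ (-s) / v₁ ≤ (min 1 (c₁ * d₁)) ^ (-s) / c₂ * ((1 + ℓ) ^ (-s) / v₀) := by
  have hm : 0 < min 1 (c₁ * d₁) := lt_min one_pos (mul_pos hc₁ hd₁)
  have hmℓ : min 1 (c₁ * d₁) * ℓ ≤ r₁ :=
    calc min 1 (c₁ * d₁) * ℓ ≤ c₁ * (d₁ * ℓ) := by
          rw [← mul_assoc]; exact mul_le_mul_of_nonneg_right (min_le_right _ _) hℓ
      _ ≤ c₁ * r₀ := mul_le_mul_of_nonneg_left hℓr hc₁.le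
      _ ≤ r₁ := hr
  have hpow := one_add_rpow_neg_le_of_mul_le hm (min_le_left _ _) hℓ hs hmℓ
  calc (1 + r₁) ^ (-s) / v₁ ≤ min 1 (c₁ * d₁) ^ (-s) * (1 + ℓ) ^ (-s) / (c₂ * v₀) :=
        div_le_div₀ (by positivity) hpow (by positivity) hv
    _ = _ := by field_simp

theorem stmt15_general {Z : Type*} [MeasurableSpace Z] (μ : Measure Z)
    (r v : Z → ℝ) (hv0 : ∀ z, 0 < v z)
    {I : Type*} [Countable I]
    (piece : I → Set Z) (y : I → Z) (ℓ : I → ℝ) (hℓ0 : ∀ i, 0 ≤ ℓ i)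
    (hcover : (⋃ i, piece i) = Set.univ)
    (c₁ c₂ : ℝ) (hc₁ : 0 < c₁) (hc₂ : 0 < c₂)
    (hbelow : ∀ i, ∀ z ∈ piece i, c₁ * r (y i) ≤ r z ∧ c₂ * v (y i) ≤ v z)
    (M : ℝ) (hM : ∀ i, μ (piece i) ≤ ENNReal.ofReal (M * v (y i)))
    (s : ℝ) (hs : 0 < s)
    (hsum : Summable fun i => (1 + ℓ i) ^ (-s))
    (d₁ d₂ : ℝ) (hd₁ : 0 < d₁)
    (hcomp : ∀ i, d₁ * ℓ i ≤ r (y i) ∧ r (y i) ≤ d₂ * ℓ i) :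
    ∫⁻ z, ENNReal.ofReal ((1 + r z) ^ (-s) / v z) ∂μ < ⊤ := by
  set C := (min 1 (c₁ * d₁)) ^ (-s) / c₂
  have hC : 0 ≤ C := by positivity
  calc ∫⁻ z, ENNReal.ofReal ((1 + r z) ^ (-s) / v z) ∂μ
      ≤ ∑' i, ENNReal.ofReal (C * ((1 + ℓ i) ^ (-s) / v (y i))) * μ (piece i) :=
        lintegral_le_tsum_mul_measure_of_iUnion_eq_univ μ hcover fun i z hz ↦
          ENNReal.ofReal_le_ofReal <| one_add_rpow_neg_div_le (hv0 _) hc₁ hc₂ hd₁ (hℓ0 i) hs.le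
            (hbelow i z hz).1 (hbelow i z hz).2 (hcomp i).1
    _ ≤ ∑' i, ENNReal.ofReal (C * M * (1 + ℓ i) ^ (-s)) := by
        refine ENNReal.tsum_le_tsum fun i ↦ (mul_le_mul_right (hM i) _).trans_eq ?_
        have hvy := hv0 (y i)
        rw [← ENNReal.ofReal_mul (by have := hℓ0 i; positivity)]
        field_simp
    _ < ⊤ := (hsum.mul_left (C * M)).tsum_ofReal_lt_top

/-- Integrability of `(1+r)^{-s} v^{-1}` on a real spherical space (abstract form
of the polar-decomposition argument). `Z` is covered by countably many pieces
`Ω y·z₀` indexed by `i ∈ I` (lattice points times a finite set, `y i` the base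
point of the piece, `ℓ i = ‖log a‖`); on each piece `r` and `v` are bounded below
in terms of their values at `y i`, the measure of each piece is controlled by the
volume weight, the lattice sum `Σ (1+ℓ i)^{-s}` converges (for `s > dim 𝔞_Z`), and
`r(y i)` is comparable to `ℓ i`. Then `∫_Z (1+r)^{-s} v^{-1} dz < ∞`. -/
theorem stmt15 {Z : Type*} [MeasurableSpace Z] (μ : Measure Z)
    (r v : Z → ℝ) (hr0 : ∀ z, 0 ≤ r z) (hv0 : ∀ z, 0 < v z)
    {I : Type*} [Countable I]
    (piece : I → Set Z) (y : I → Z) (ℓ : I → ℝ) (hℓ0 : ∀ i, 0 ≤ ℓ i)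
    (hcover : (⋃ i, piece i) = Set.univ)
    (c₁ c₂ : ℝ) (hc₁ : 0 < c₁) (hc₂ : 0 < c₂)
    (hbelow : ∀ i, ∀ z ∈ piece i, c₁ * r (y i) ≤ r z ∧ c₂ * v (y i) ≤ v z)
    (M : ℝ) (hM : ∀ i, μ (piece i) ≤ ENNReal.ofReal (M * v (y i)))
    (s : ℝ) (hs : 0 < s)
    (hsum : Summable fun i => (1 + ℓ i) ^ (-s))
    (d₁ d₂ : ℝ) (hd₁ : 0 < d₁) (hd₂ : 0 < d₂)
    (hcomp : ∀ i, d₁ * ℓ i ≤ r (y i) ∧ r (y i) ≤ d₂ * ℓ i) :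
    ∫⁻ z, ENNReal.ofReal ((1 + r z) ^ (-s) / v z) ∂μ < ⊤ :=
  stmt15_general μ r v hv0 piece y ℓ hℓ0 hcover c₁ c₂ hc₁ hc₂ hbelow M hM s hs hsum d₁ d₂ hd₁ hcomp
end

section
/- In the setting of the previous ODE lemma, if additionally c = lim_{t→−∞} e^{−λt} f(t) = 0 and |r(t)| ≤ C e^{(Re λ + 2)t} for t ≤ 0, then |f(t)| ≤ C₁ e^{(Re λ + 2)t} for all t ≤ 0; iterating (assuming at each stage the corresponding bound on r improves by e^{2t}) yields |f(t)| ≤ C_N e^{Nt} for all N and all t ≤ 0. -/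
/-!
Variation of constants: `g t = e^{-λt} f t` satisfies `g' = e^{-λt} r`, so the hypothesis on `r`
gives `‖g'(s)‖ ≤ C e^{a s}`. Since `g → 0` at `-∞`, comparing `g` on `[T, t]` with
`‖g T‖ + (C/a)(e^{a·} - e^{aT})` and letting `T → -∞` yields `‖g t‖ ≤ (C/a) e^{at}`, i.e.
`‖f t‖ ≤ (C/a) e^{(Re λ + a)t}`. For the iterated statement take `a = 2(M + 1)` large enough.
-/

open Filter Topology

section ExpDecay

variable {E : Type*} [NormedAddCommGroup E]

theorem norm_le_of_tendsto_atBot_of_norm_deriv_le_exp [NormedSpace ℝ E] {g g' : ℝ → E}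
    {a C t₀ : ℝ} (ha : 0 < a) (hg : ∀ t ≤ t₀, HasDerivAt g (g' t) t)
    (hg' : ∀ t ≤ t₀, ‖g' t‖ ≤ C * Real.exp (a * t))
    (hlim : Tendsto g atBot (𝓝 0)) {t : ℝ} (ht : t ≤ t₀) :
    ‖g t‖ ≤ C / a * Real.exp (a * t) := by
  set B : ℝ → ℝ → ℝ := fun T x => ‖g T‖ + C / a * (Real.exp (a * x) - Real.exp (a * T))
  have hB : ∀ T x, HasDerivAt (B T) (C * Real.exp (a * x)) x := fun T x => by
    refine (((((hasDerivAt_id' x).const_mul a).exp.sub_const (Real.exp (a * T))).const_mul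
      (C / a)).const_add ‖g T‖).congr_deriv ?_
    field_simp
  have hle : ∀ T ≤ t, ‖g t‖ ≤ B T t := fun T hT =>
    image_norm_le_of_norm_deriv_right_le_deriv_boundary
      (fun x hx => (hg x (hx.2.trans ht)).continuousAt.continuousWithinAt)
      (fun x hx => (hg x (hx.2.le.trans ht)).hasDerivWithinAt)
      (by simp [B]) (hB T) (fun x hx => hg' x (hx.2.le.trans ht)) ⟨hT, le_rfl⟩
  have hexp : Tendsto (fun T => Real.exp (a * T)) atBot (𝓝 0) :=
    Real.tendsto_exp_atBot.comp (tendsto_id.const_mul_atBot ha)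
  have hBlim : Tendsto (fun T => B T t) atBot (𝓝 (C / a * Real.exp (a * t))) := by
    simpa using hlim.norm.add ((hexp.const_sub (Real.exp (a * t))).const_mul (C / a))
  exact ge_of_tendsto hBlim ((eventually_le_atBot t).mono hle)

theorem exists_norm_le_exp_of_le {f : ℝ → E} {b c C : ℝ} (hcb : c ≤ b)
    (h : ∀ t ≤ (0 : ℝ), ‖f t‖ ≤ C * Real.exp (b * t)) :
    ∃ C' : ℝ, ∀ t ≤ (0 : ℝ), ‖f t‖ ≤ C' * Real.exp (c * t) :=
  ⟨max C 0, fun t ht => (h t ht).trans <| mul_le_mul (le_max_left _ _)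
    (Real.exp_le_exp.2 (mul_le_mul_of_nonpos_right hcb ht)) (Real.exp_pos _).le (le_max_right _ _)⟩

end ExpDecay

section LinearODE

theorem norm_cexp_mul_ofReal (l : ℂ) (t : ℝ) : ‖Complex.exp (l * t)‖ = Real.exp (l.re * t) := by
  simp [Complex.norm_exp]

variable {f r : ℝ → ℂ} {l : ℂ}

theorem hasDerivAt_cexp_neg_mul_mul {t : ℝ} (hode : HasDerivAt f (l * f t + r t) t) :
    HasDerivAt (fun s : ℝ => Complex.exp (-(l * s)) * f s) (Complex.exp (-(l * t)) * r t) t := by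
  have hexp : HasDerivAt (fun s : ℝ => Complex.exp (-(l * s))) (Complex.exp (-(l * t)) * -l) t :=
    ((Complex.ofRealCLM.hasDerivAt.const_mul l).neg.congr_deriv (by simp)).cexp
  refine (hexp.mul hode).congr_deriv ?_
  ring

theorem norm_le_exp_of_hasDerivAt_mul_add {a C t₀ : ℝ} (ha : 0 < a)
    (hode : ∀ t ≤ t₀, HasDerivAt f (l * f t + r t) t)
    (hc0 : Tendsto (fun t : ℝ => Complex.exp (-(l * t)) * f t) atBot (𝓝 0))
    (hrb : ∀ t ≤ t₀, ‖r t‖ ≤ C * Real.exp ((l.re + a) * t)) {t : ℝ} (ht : t ≤ t₀) :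
    ‖f t‖ ≤ C / a * Real.exp ((l.re + a) * t) := by
  have hrb' : ∀ s ≤ t₀, ‖Complex.exp (-(l * s)) * r s‖ ≤ C * Real.exp (a * s) := fun s hs => by
    rw [norm_mul, ← neg_mul, norm_cexp_mul_ofReal]
    calc Real.exp ((-l).re * s) * ‖r s‖
        ≤ Real.exp ((-l).re * s) * (C * Real.exp ((l.re + a) * s)) := by gcongr; exact hrb s hs
      _ = C * Real.exp (a * s) := by
        rw [mul_left_comm, ← Real.exp_add]; congr 2; simp only [Complex.neg_re]; ring
  have hg := norm_le_of_tendsto_atBot_of_norm_deriv_le_exp ha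
    (fun s hs => hasDerivAt_cexp_neg_mul_mul (hode s hs)) hrb' hc0 ht
  have hf : f t = Complex.exp (l * t) * (Complex.exp (-(l * t)) * f t) := by
    rw [← mul_assoc, ← Complex.exp_add, add_neg_cancel, Complex.exp_zero, one_mul]
  calc ‖f t‖ = Real.exp (l.re * t) * ‖Complex.exp (-(l * t)) * f t‖ := by
        rw [hf, norm_mul, norm_cexp_mul_ofReal, ← hf]
    _ ≤ Real.exp (l.re * t) * (C / a * Real.exp (a * t)) := by gcongr
    _ = C / a * Real.exp ((l.re + a) * t) := by
        rw [mul_left_comm, ← Real.exp_add, add_mul]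

end LinearODE

theorem stmt17_general (f r : ℝ → ℂ) (l : ℂ)
    (hode : ∀ t : ℝ, HasDerivAt f (l * f t + r t) t)
    (hc0 : Filter.Tendsto (fun t : ℝ => Complex.exp (-(l * t)) * f t)
      Filter.atBot (nhds 0))
    (hrb : ∃ C : ℝ, ∀ t ≤ (0 : ℝ), ‖r t‖ ≤ C * Real.exp ((l.re + 2) * t)) :
    (∃ C₁ : ℝ, ∀ t ≤ (0 : ℝ), ‖f t‖ ≤ C₁ * Real.exp ((l.re + 2) * t)) ∧
    ((∀ N : ℕ, ∃ C : ℝ, ∀ t ≤ (0 : ℝ),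
        ‖r t‖ ≤ C * Real.exp ((l.re + 2 * (N + 1)) * t)) →
      ∀ N : ℕ, ∃ C : ℝ, ∀ t ≤ (0 : ℝ), ‖f t‖ ≤ C * Real.exp ((N : ℝ) * t)) := by
  refine ⟨?_, fun hrbN N => ?_⟩
  · obtain ⟨C, hC⟩ := hrb
    exact ⟨C / 2, fun t ht =>
      norm_le_exp_of_hasDerivAt_mul_add two_pos (fun s _ => hode s) hc0 hC ht⟩
  · obtain ⟨M, hM⟩ := exists_nat_ge (((N : ℝ) - l.re) / 2)
    obtain ⟨C, hC⟩ := hrbN M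
    exact exists_norm_le_exp_of_le (b := l.re + 2 * (M + 1)) (by linarith) fun t ht =>
      norm_le_exp_of_hasDerivAt_mul_add (by positivity) (fun s _ => hode s) hc0 hC ht

/-- Iterated bootstrapping: if `f' = λf + r`, `f` has some a priori exponential
bound on `t ≤ 0`, the renormalized limit `lim_{t→−∞} e^{−λt} f(t)` is `0`, and
`|r(t)| ≤ C e^{(Re λ+2)t}` for `t ≤ 0`, then `|f(t)| ≤ C₁ e^{(Re λ+2)t}` for
`t ≤ 0`; and if the bound on `r` improves by `e^{2t}` at each stage, then for every
`N` one has `|f(t)| ≤ C_N e^{Nt}` for all `t ≤ 0`. -/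
theorem stmt17 (f r : ℝ → ℂ) (l : ℂ)
    (hr : Continuous r)
    (hode : ∀ t : ℝ, HasDerivAt f (l * f t + r t) t)
    (hf : ∃ Λ C : ℝ, ∀ t ≤ (0 : ℝ), ‖f t‖ ≤ C * Real.exp (Λ * t))
    (hc0 : Filter.Tendsto (fun t : ℝ => Complex.exp (-(l * t)) * f t)
      Filter.atBot (nhds 0))
    (hrb : ∃ C : ℝ, ∀ t ≤ (0 : ℝ), ‖r t‖ ≤ C * Real.exp ((l.re + 2) * t)) :
    (∃ C₁ : ℝ, ∀ t ≤ (0 : ℝ), ‖f t‖ ≤ C₁ * Real.exp ((l.re + 2) * t)) ∧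
    ((∀ N : ℕ, ∃ C : ℝ, ∀ t ≤ (0 : ℝ),
        ‖r t‖ ≤ C * Real.exp ((l.re + 2 * (N + 1)) * t)) →
      ∀ N : ℕ, ∃ C : ℝ, ∀ t ≤ (0 : ℝ), ‖f t‖ ≤ C * Real.exp ((N : ℝ) * t)) :=
  stmt17_general f r l hode hc0 hrb
end
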